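/- arXiv:2505.11317 — 6 statements merged into one kernel-verified Lean document; each statement's English description precedes it below -/
import Mathlib

section
/- Let d ≥ 1 and let δ be a real number with 0 < δ < 1/2. Let p, q, u, v be four points of the Euclidean space ℝ^d satisfying: (i) 1 − δ ≤ dist(p,q) ≤ 1 + δ and 1 − δ ≤ dist(u,v) ≤ 1 + δ; (ii) dist(p,u) ≥ 3√δ, dist(p,v) ≥ 3√δ, dist(q,u) ≥ 3√δ and dist(q,v) ≥ 3√δ; (iii) writing θ for the angle between the vectors v − u and q − p (so θ ∈ [0,π]), one has min(θ, π − θ) ≤ √δ/3 (the angle between the line supporting uv and the line supporting pq is at most √δ/3). Then max{dist(q,u), dist(p,v), dist(p,u), dist(q,v)} > 1 + δ. -/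
/-!
For any four points, `|qu|² + |pv|² − |pu|² − |qv|² = 2⟪v − u, q − p⟫`. If the angle between
`v − u` and `q − p` is at most `√δ/3`, then `cos angle ≥ 1 − δ/18` and the right side is at least
`2(1 − δ)²(1 − δ/18)`; if moreover `|qu|, |pv| ≤ 1 + δ` and `|pu|, |qv| ≥ 3√δ`, the left side is at
most `2(1 + δ)² − 18δ`, which is smaller. An angle close to `π` reduces to this case by swapping
`u` and `v`.
-/

open Real InnerProductGeometry
open scoped InnerProductSpace

section InnerProductSpace

variable {E : Type*} [NormedAddCommGroup E] [InnerProductSpace ℝ E]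

theorem dist_sq_add_dist_sq_sub_dist_sq_sub_dist_sq (p q u v : E) :
    dist q u ^ 2 + dist p v ^ 2 - dist p u ^ 2 - dist q v ^ 2 = 2 * ⟪v - u, q - p⟫_ℝ := by
  simp only [dist_eq_norm, ← real_inner_self_eq_norm_sq, inner_sub_left, inner_sub_right,
    real_inner_comm]
  ring

theorem one_sub_sq_div_two_mul_norm_mul_norm_le_inner {x y : E} {ε : ℝ} (h : angle x y ≤ ε) :
    (1 - ε ^ 2 / 2) * (‖x‖ * ‖y‖) ≤ ⟪x, y⟫_ℝ := by
  have h_cos : 1 - ε ^ 2 / 2 ≤ cos (angle x y) := by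
    have h_sq : angle x y ^ 2 ≤ ε ^ 2 := pow_le_pow_left₀ (angle_nonneg x y) h 2
    linarith [one_sub_sq_div_two_le_cos (x := angle x y)]
  rw [← cos_angle_mul_norm_mul_norm]
  exact mul_le_mul_of_nonneg_right h_cos (by positivity)

theorem false_of_angle_le_of_dist_le {δ : ℝ} (hδ0 : 0 < δ) (hδ1 : δ ≤ 1) {p q u v : E}
    (hpq : 1 - δ ≤ dist p q) (huv : 1 - δ ≤ dist u v)
    (hpu : 3 * √δ ≤ dist p u) (hqv : 3 * √δ ≤ dist q v)
    (hqu : dist q u ≤ 1 + δ) (hpv : dist p v ≤ 1 + δ)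
    (hangle : angle (v - u) (q - p) ≤ √δ / 3) : False := by
  have h_sqrt : √δ ^ 2 = δ := sq_sqrt hδ0.le
  have h_norms : (1 - δ) ^ 2 ≤ ‖v - u‖ * ‖q - p‖ := by
    rw [← dist_eq_norm, ← dist_eq_norm, dist_comm v, dist_comm q, sq]
    exact mul_le_mul huv hpq (by linarith) dist_nonneg
  have h_inner_lo : (1 - δ) ^ 2 * (1 - δ / 18) ≤ ⟪v - u, q - p⟫_ℝ := by
    have h := one_sub_sq_div_two_mul_norm_mul_norm_le_inner hangle
    rw [div_pow, h_sqrt] at h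
    nlinarith
  have h_inner_hi : 2 * ⟪v - u, q - p⟫_ℝ ≤ 2 * (1 + δ) ^ 2 - 18 * δ := by
    rw [← dist_sq_add_dist_sq_sub_dist_sq_sub_dist_sq]
    have h_far : 9 * δ ≤ dist p u ^ 2 ∧ 9 * δ ≤ dist q v ^ 2 := by
      constructor <;> nlinarith [sqrt_nonneg δ]
    nlinarith [dist_nonneg (x := q) (y := u), dist_nonneg (x := p) (y := v)]
  nlinarith [mul_nonneg hδ0.le (mul_nonneg hδ0.le (sub_nonneg.2 hδ1))]

end InnerProductSpace

theorem almost_diametrical_pairs_far_apart_or_long_general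
    (d : ℕ) (δ : ℝ) (hδ0 : 0 < δ) (hδ1 : δ < 1 / 2)
    (p q u v : EuclideanSpace ℝ (Fin d))
    (hpq_lo : 1 - δ ≤ dist p q)
    (huv_lo : 1 - δ ≤ dist u v)
    (hpu : 3 * Real.sqrt δ ≤ dist p u)
    (hpv : 3 * Real.sqrt δ ≤ dist p v)
    (hqu : 3 * Real.sqrt δ ≤ dist q u)
    (hqv : 3 * Real.sqrt δ ≤ dist q v)
    (hangle :
      min (InnerProductGeometry.angle (v - u) (q - p))
          (π - InnerProductGeometry.angle (v - u) (q - p)) ≤ Real.sqrt δ / 3) :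
    1 + δ < max (max (dist q u) (dist p v)) (max (dist p u) (dist q v)) := by
  have hδ_le_one : δ ≤ 1 := by linarith
  by_contra! h
  simp only [max_le_iff] at h
  obtain ⟨⟨hQU, hPV⟩, hPU, hQV⟩ := h
  rcases min_le_iff.mp hangle with h_small | h_large
  · exact false_of_angle_le_of_dist_le hδ0 hδ_le_one hpq_lo huv_lo hpu hqv hQU hPV h_small
  · rw [← angle_neg_left, neg_sub] at h_large
    exact false_of_angle_le_of_dist_le hδ0 hδ_le_one hpq_lo (dist_comm u v ▸ huv_lo) hpv hqu hQV hPU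
      h_large

theorem almost_diametrical_pairs_far_apart_or_long
    (d : ℕ) (hd : 1 ≤ d) (δ : ℝ) (hδ0 : 0 < δ) (hδ1 : δ < 1 / 2)
    (p q u v : EuclideanSpace ℝ (Fin d))
    (hpq_lo : 1 - δ ≤ dist p q) (hpq_hi : dist p q ≤ 1 + δ)
    (huv_lo : 1 - δ ≤ dist u v) (huv_hi : dist u v ≤ 1 + δ)
    (hpu : 3 * Real.sqrt δ ≤ dist p u)
    (hpv : 3 * Real.sqrt δ ≤ dist p v)
    (hqu : 3 * Real.sqrt δ ≤ dist q u)
    (hqv : 3 * Real.sqrt δ ≤ dist q v)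
    (hangle :
      min (InnerProductGeometry.angle (v - u) (q - p))
          (π - InnerProductGeometry.angle (v - u) (q - p)) ≤ Real.sqrt δ / 3) :
    1 + δ < max (max (dist q u) (dist p v)) (max (dist p u) (dist q v)) :=
  almost_diametrical_pairs_far_apart_or_long_general d δ hδ0 hδ1 p q u v hpq_lo huv_lo hpu hpv hqu
    hqv hangle
end

section
/- For every dimension d ≥ 2 there is a constant C = C(d) > 0 with the following property: for every ε ∈ (0,1] there exists a finite set V of unit vectors in the Euclidean space ℝ^d with |V| ≤ C·ε^{−(d−1)/2}, such that for every finite nonempty set P ⊆ ℝ^d one has (1 − ε)·diam(P) ≤ max_{v ∈ V} max_{p,q ∈ P} ⟨p − q, v⟩ ≤ diam(P). That is, projecting the points of P onto each direction in V, finding the extreme pair in each direction, and taking the pair of maximum projected distance yields an ε-approximation of the diameter, using O(ε^{−(d−1)/2}) directions. -/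
open RealInnerProductSpace Metric MeasureTheory

private lemma pow_sub_pow_aux : ∀ (n : ℕ) (a b : ℝ), 0 ≤ b → b ≤ a →
    a ^ (n + 1) - b ^ (n + 1) ≤ (n + 1) * (a - b) * a ^ n := by
  intro n
  induction n with
  | zero => intro a b hb hba; simpa using hba
  | succ n ih =>
      intro a b hb hba
      have h1 := ih a b hb hba
      have h2 : b ^ (n + 1) ≤ a ^ (n + 1) := pow_le_pow_left₀ hb hba _
      have ha : 0 ≤ a := hb.trans hba
      have h3 : 0 ≤ a ^ (n+1) := pow_nonneg ha _
      have key : a ^ (n + 2) - b ^ (n + 2)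
          = a * (a ^ (n + 1) - b ^ (n + 1)) + (a - b) * b ^ (n + 1) := by ring
      have e1 : a * (a ^ (n + 1) - b ^ (n + 1)) ≤ ((n:ℝ) + 1) * (a - b) * a ^ (n+1) := by
        have := mul_le_mul_of_nonneg_left h1 ha
        calc a * (a ^ (n + 1) - b ^ (n + 1)) ≤ a * (((n:ℝ) + 1) * (a - b) * a ^ n) := this
          _ = ((n:ℝ) + 1) * (a - b) * a ^ (n+1) := by ring
      have e2 : (a - b) * b ^ (n + 1) ≤ (a - b) * a ^ (n + 1) :=
        mul_le_mul_of_nonneg_left h2 (by linarith)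
      push_cast
      show a ^ (n + 1 + 1) - b ^ (n + 1 + 1) ≤ ((n:ℝ) + 1 + 1) * (a - b) * a ^ (n + 1)
      rw [show n + 1 + 1 = n + 2 from rfl, key]
      linarith

private lemma packing_bound (d : ℕ) (hd : 1 ≤ d) {δ : ℝ} (hδ0 : 0 < δ) (hδ2 : δ ≤ 2)
    (S : Finset (EuclideanSpace ℝ (Fin d)))
    (hS1 : ∀ x ∈ S, ‖x‖ = 1)
    (hsep : ∀ x ∈ S, ∀ y ∈ S, x ≠ y → δ ≤ dist x y) :
    (S.card : ℝ) * (δ/2) ^ d ≤ (d : ℝ) * 2 ^ d * (δ/2) := by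
  haveI : Nonempty (Fin d) := ⟨⟨0, hd⟩⟩
  set t : ℝ := δ / 2 with ht_def
  have ht0 : 0 < t := by positivity
  have ht1 : t ≤ 1 := by simp only [ht_def]; linarith
  have hfr : Module.finrank ℝ (EuclideanSpace ℝ (Fin d)) = d := finrank_euclideanSpace_fin
  set V₁ := volume (ball (0 : EuclideanSpace ℝ (Fin d)) 1) with hV₁
  have hV₁0 : V₁ ≠ 0 := (measure_ball_pos _ _ one_pos).ne'
  have hV₁top : V₁ ≠ ⊤ := measure_ball_lt_top.ne
  -- disjointness of small balls
  have hdisj : (S : Set (EuclideanSpace ℝ (Fin d))).PairwiseDisjoint (fun x => ball x t) := by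
    intro x hx y hy hxy
    apply Set.disjoint_left.2
    intro z hz hz'
    have : dist x y < δ := by
      calc dist x y ≤ dist x z + dist z y := dist_triangle _ _ _
        _ < t + t := by
            rw [dist_comm x z]
            exact add_lt_add hz hz'
        _ = δ := by rw [ht_def]; ring
    exact absurd (hsep x hx y hy hxy) (not_le.2 this)
  have hμU : volume (⋃ x ∈ S, ball x t) = (S.card : ENNReal) * (ENNReal.ofReal (t ^ d) * V₁) := by
    rw [measure_biUnion_finset hdisj (fun x _ => measurableSet_ball)]
    rw [Finset.sum_congr rfl (fun x _ => by
      rw [Measure.addHaar_ball volume x ht0.le, hfr])]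
    rw [Finset.sum_const, nsmul_eq_mul]
  -- small balls don't meet the central ball
  have hdisj2 : Disjoint (⋃ x ∈ S, ball x t) (ball (0 : EuclideanSpace ℝ (Fin d)) (1 - t)) := by
    apply Set.disjoint_left.2
    intro z hz hz'
    simp only [Set.mem_iUnion] at hz
    obtain ⟨x, hx, hzx⟩ := hz
    have hx1 : ‖x‖ = 1 := hS1 x hx
    rw [mem_ball] at hzx
    rw [mem_ball, dist_zero_right] at hz'
    have h1 : dist x (0 : EuclideanSpace ℝ (Fin d)) ≤ dist x z + dist z 0 := dist_triangle _ _ _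
    rw [dist_zero_right, dist_zero_right, hx1, dist_comm x z] at h1
    linarith
  -- everything inside big closed ball
  have hsub : (⋃ x ∈ S, ball x t) ∪ ball (0 : EuclideanSpace ℝ (Fin d)) (1 - t) ⊆ closedBall (0 : EuclideanSpace ℝ (Fin d)) (1 + t) := by
    apply Set.union_subset
    · intro z hz
      simp only [Set.mem_iUnion] at hz
      obtain ⟨x, hx, hzx⟩ := hz
      rw [mem_ball] at hzx
      rw [mem_closedBall]
      have hx1 := hS1 x hx
      have h1 : dist z (0 : EuclideanSpace ℝ (Fin d)) ≤ dist z x + dist x 0 := dist_triangle _ _ _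
      rw [dist_zero_right, dist_zero_right, hx1] at h1
      rw [dist_zero_right]
      linarith
    · exact (ball_subset_closedBall).trans (closedBall_subset_closedBall (by linarith))
  have hmeas : volume ((⋃ x ∈ S, ball x t) ∪ ball (0 : EuclideanSpace ℝ (Fin d)) (1 - t))
      = volume (⋃ x ∈ S, ball x t) + volume (ball (0 : EuclideanSpace ℝ (Fin d)) (1 - t)) :=
    measure_union hdisj2 measurableSet_ball
  have hineq : (S.card : ENNReal) * (ENNReal.ofReal (t ^ d) * V₁)
      + ENNReal.ofReal ((1 - t) ^ d) * V₁ ≤ ENNReal.ofReal ((1 + t) ^ d) * V₁ := by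
    have hb1 : volume (ball (0 : EuclideanSpace ℝ (Fin d)) (1 - t))
        = ENNReal.ofReal ((1 - t) ^ d) * V₁ := by
      rw [Measure.addHaar_ball volume _ (by linarith : (0:ℝ) ≤ 1 - t), hfr]
    have hb2 : volume (closedBall (0 : EuclideanSpace ℝ (Fin d)) (1 + t))
        = ENNReal.ofReal ((1 + t) ^ d) * V₁ := by
      rw [Measure.addHaar_closedBall volume _ (by linarith : (0:ℝ) ≤ 1 + t), hfr]
    rw [← hμU, ← hb1, ← hb2, ← hmeas]
    exact measure_mono hsub
  have hcast : (S.card : ENNReal) = ENNReal.ofReal (S.card : ℝ) := by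
    simp [ENNReal.ofReal_natCast]
  rw [hcast, ← mul_assoc, ← ENNReal.ofReal_mul (by positivity), ← add_mul,
    ← ENNReal.ofReal_add (by positivity)
      (by
        have h : (0:ℝ) ≤ 1 - t := by linarith
        positivity)] at hineq
  have hre : (S.card : ℝ) * t ^ d + (1 - t) ^ d ≤ (1 + t) ^ d := by
    have := (ENNReal.mul_le_mul_iff_left hV₁0 hV₁top).1 hineq
    exact (ENNReal.ofReal_le_ofReal_iff (by positivity)).1 this
  obtain ⟨m, rfl⟩ : ∃ m, d = m + 1 := ⟨d - 1, (Nat.succ_pred_eq_of_pos hd).symm⟩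
  have hsub2 : (1 + t) ^ (m+1) - (1 - t) ^ (m+1) ≤ (m+1) * ((1+t) - (1-t)) * (1+t) ^ m :=
    pow_sub_pow_aux m (1+t) (1-t) (by linarith) (by linarith)
  have hpow : (1 + t : ℝ) ^ m ≤ 2 ^ m := pow_le_pow_left₀ (by linarith) (by linarith) m
  have h2 : ((m:ℝ)+1) * (2*t) * (1+t)^m ≤ ((m:ℝ)+1) * (2*t) * 2^m := by
    apply mul_le_mul_of_nonneg_left hpow (by positivity)
  have : (S.card : ℝ) * t ^ (m+1) ≤ ((m:ℝ)+1) * (2*t) * 2^m := by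
    nlinarith
  calc (S.card : ℝ) * t ^ (m+1) ≤ ((m:ℝ)+1) * (2*t) * 2^m := this
    _ = ((m+1 : ℕ) : ℝ) * 2 ^ (m+1) * t := by push_cast; ring

private lemma exists_net (d : ℕ) (hd : 1 ≤ d) {δ : ℝ} (hδ0 : 0 < δ) (hδ2 : δ ≤ 2) :
    ∃ V : Finset (EuclideanSpace ℝ (Fin d)), V.Nonempty ∧ (∀ v ∈ V, ‖v‖ = 1) ∧
      (V.card : ℝ) * (δ/2) ^ (d-1) ≤ (d : ℝ) * 2 ^ d ∧
      ∀ u : EuclideanSpace ℝ (Fin d), ‖u‖ = 1 → ∃ v ∈ V, dist u v ≤ δ := by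
  classical
  have ht0 : (0:ℝ) < δ/2 := by linarith
  have key : ∀ S : Finset (EuclideanSpace ℝ (Fin d)), (∀ x ∈ S, ‖x‖ = 1) →
      (∀ x ∈ S, ∀ y ∈ S, x ≠ y → δ ≤ dist x y) →
      (S.card : ℝ) * (δ/2) ^ (d-1) ≤ (d:ℝ) * 2 ^ d := by
    intro S h1 h2
    have h := packing_bound d hd hδ0 hδ2 S h1 h2
    have hpow : (δ/2 : ℝ)^d = (δ/2)^(d-1) * (δ/2) := by
      rw [← pow_succ, Nat.sub_add_cancel hd]
    rw [hpow, ← mul_assoc] at h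
    exact le_of_mul_le_mul_right h ht0
  set N : ℕ := Nat.ceil ((d:ℝ) * 2^d / (δ/2)^(d-1)) with hN
  have keyN : ∀ S : Finset (EuclideanSpace ℝ (Fin d)), (∀ x ∈ S, ‖x‖ = 1) →
      (∀ x ∈ S, ∀ y ∈ S, x ≠ y → δ ≤ dist x y) → S.card ≤ N := by
    intro S h1 h2
    have h := key S h1 h2
    have hle : (S.card : ℝ) ≤ (d:ℝ) * 2^d / (δ/2)^(d-1) :=
      (le_div_iff₀ (by positivity)).2 h
    have h2 : (S.card : ℝ) ≤ (N : ℝ) := hle.trans (Nat.le_ceil _)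
    exact Nat.cast_le.mp h2
  set T : Set ℕ := {n | ∃ S : Finset (EuclideanSpace ℝ (Fin d)),
      (∀ x ∈ S, ‖x‖ = 1) ∧ (∀ x ∈ S, ∀ y ∈ S, x ≠ y → δ ≤ dist x y) ∧ S.card = n} with hT
  have hT1 : 1 ∈ T := by
    refine ⟨{EuclideanSpace.single (⟨0, hd⟩ : Fin d) (1:ℝ)}, ?_, ?_, rfl⟩
    · intro x hx
      rw [Finset.mem_singleton] at hx
      rw [hx, EuclideanSpace.norm_single]
      norm_num
    · intro x hx y hy hxy
      rw [Finset.mem_singleton] at hx hy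
      exact absurd (hx.trans hy.symm) hxy
  have hbdd : BddAbove T := by
    refine ⟨N, fun n hn => ?_⟩
    obtain ⟨S, h1, h2, rfl⟩ := hn
    exact keyN S h1 h2
  obtain ⟨S, hS1, hS2, hScard⟩ := Nat.sSup_mem ⟨1, hT1⟩ hbdd
  refine ⟨S, ?_, hS1, ?_, ?_⟩
  · rw [← Finset.card_pos, hScard]
    exact le_csSup hbdd hT1
  · exact key S hS1 hS2
  · intro u hu
    by_contra hcon
    push_neg at hcon
    have hu_notin : u ∉ S := fun hmem => absurd (dist_self u ▸ hcon u hmem) (by simp; linarith)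
    have hins : sSup T + 1 ∈ T := by
      refine ⟨insert u S, ?_, ?_, ?_⟩
      · intro x hx
        rcases Finset.mem_insert.1 hx with rfl | hx
        · exact hu
        · exact hS1 x hx
      · intro x hx y hy hxy
        rcases Finset.mem_insert.1 hx with rfl | hx' <;>
          rcases Finset.mem_insert.1 hy with rfl | hy'
        · exact absurd rfl hxy
        · exact (hcon y hy').le
        · rw [dist_comm]; exact (hcon x hx').le
        · exact hS2 x hx' y hy' hxy
      · rw [Finset.card_insert_of_notMem hu_notin, hScard]
    have := le_csSup hbdd hins
    omega


theorem diameter_approximated_by_few_directions :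
    ∀ d : ℕ, 2 ≤ d → ∃ C : ℝ, 0 < C ∧
      ∀ ε : ℝ, 0 < ε → ε ≤ 1 →
        ∃ V : Finset (EuclideanSpace ℝ (Fin d)),
          (∀ v ∈ V, ‖v‖ = 1) ∧
          (V.card : ℝ) ≤ C * ε ^ (-(((d : ℝ) - 1) / 2)) ∧
          ∀ P : Finset (EuclideanSpace ℝ (Fin d)), P.Nonempty →
            (∀ v ∈ V, ∀ p ∈ P, ∀ q ∈ P,
              ⟪p - q, v⟫ ≤ Metric.diam (↑P : Set (EuclideanSpace ℝ (Fin d)))) ∧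
            (∃ v ∈ V, ∃ p ∈ P, ∃ q ∈ P,
              (1 - ε) * Metric.diam (↑P : Set (EuclideanSpace ℝ (Fin d)))
                ≤ ⟪p - q, v⟫) := by
  intro d hd
  have hd1 : 1 ≤ d := le_trans one_le_two hd
  refine ⟨(d : ℝ) * 2 ^ d * 2 ^ (d - 1), by positivity, ?_⟩
  intro ε hε0 hε1
  set δ := Real.sqrt (2 * ε) with hδ
  have hδ0 : 0 < δ := Real.sqrt_pos.2 (by linarith)
  have hδ2 : δ ≤ 2 := by
    have h4 : Real.sqrt 4 = 2 := by
      rw [show (4:ℝ) = 2^2 by norm_num, Real.sqrt_sq (by norm_num : (0:ℝ) ≤ 2)]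
    rw [← h4]
    exact Real.sqrt_le_sqrt (by linarith)
  have hδsq : δ ^ 2 = 2 * ε := Real.sq_sqrt (by linarith)
  obtain ⟨V, hVne, hVunit, hVcard, hVnet⟩ := exists_net d hd1 hδ0 hδ2
  have hn : ((d - 1 : ℕ) : ℝ) = (d : ℝ) - 1 := by
    rw [Nat.cast_sub hd1]; norm_num
  refine ⟨V, hVunit, ?_, ?_⟩
  · -- cardinality bound
    have hδn : (δ:ℝ) ^ (d - 1) = (2*ε) ^ (((d - 1 : ℕ):ℝ)/2) := by
      rw [hδ, Real.sqrt_eq_rpow, ← Real.rpow_natCast ((2*ε) ^ ((1:ℝ)/2)) (d-1),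
        ← Real.rpow_mul (by linarith)]
      congr 1
      ring
    have hrx : ε ^ (-(((d : ℝ) - 1) / 2)) = (ε ^ (((d - 1 : ℕ):ℝ)/2))⁻¹ := by
      rw [Real.rpow_neg hε0.le, hn]
    have hplit : ((δ/2 : ℝ))^(d-1) * 2^(d-1) = δ^(d-1) := by
      rw [div_pow]
      field_simp
    have e1 : (V.card : ℝ) ≤ (d:ℝ) * 2^d * 2^(d-1) / δ^(d-1) := by
      rw [le_div_iff₀ (by positivity)]
      have h := mul_le_mul_of_nonneg_right hVcard (by positivity : (0:ℝ) ≤ 2^(d-1))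
      calc (V.card:ℝ) * δ^(d-1) = V.card * (δ/2)^(d-1) * 2^(d-1) := by
            rw [mul_assoc, hplit]
        _ ≤ (d:ℝ) * 2^d * 2^(d-1) := h
    have e2 : ((d:ℝ) * 2^d * 2^(d-1)) / δ^(d-1)
        ≤ (d:ℝ) * 2^d * 2^(d-1) * ε ^ (-(((d : ℝ) - 1) / 2)) := by
      rw [div_eq_mul_inv]
      apply mul_le_mul_of_nonneg_left _ (by positivity)
      rw [hrx, hδn]
      exact inv_anti₀ (Real.rpow_pos_of_pos hε0 _)
        (Real.rpow_le_rpow hε0.le (by linarith) (by positivity))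
    exact e1.trans e2
  · intro P hP
    have hbdd : Bornology.IsBounded (↑P : Set (EuclideanSpace ℝ (Fin d))) :=
      P.finite_toSet.isBounded
    obtain ⟨pq, hpq, hmax⟩ := Finset.exists_max_image (P ×ˢ P)
      (fun z => dist z.1 z.2) (hP.product hP)
    obtain ⟨p, q⟩ := pq
    rw [Finset.mem_product] at hpq
    obtain ⟨hp, hq⟩ := hpq
    have hdiam_le : Metric.diam (↑P : Set (EuclideanSpace ℝ (Fin d))) ≤ dist p q :=
      Metric.diam_le_of_forall_dist_le dist_nonneg
        (fun a ha b hb => hmax (a, b) (Finset.mem_product.2 ⟨ha, hb⟩))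
    have hdiam_ge : dist p q ≤ Metric.diam (↑P : Set (EuclideanSpace ℝ (Fin d))) :=
      Metric.dist_le_diam_of_mem hbdd hp hq
    have hdiam : Metric.diam (↑P : Set (EuclideanSpace ℝ (Fin d))) = dist p q :=
      le_antisymm hdiam_le hdiam_ge
    constructor
    · intro v hv a ha b hb
      have h1 : ⟪a - b, v⟫ ≤ ‖a - b‖ * ‖v‖ := real_inner_le_norm _ _
      rw [hVunit v hv, mul_one] at h1
      have h2 : ‖a - b‖ = dist a b := (dist_eq_norm a b).symm
      have h3 : dist a b ≤ Metric.diam (↑P : Set (EuclideanSpace ℝ (Fin d))) :=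
        Metric.dist_le_diam_of_mem hbdd ha hb
      linarith
    · rcases eq_or_lt_of_le (Metric.diam_nonneg
        (s := (↑P : Set (EuclideanSpace ℝ (Fin d))))) with h0 | hpos
      · obtain ⟨v, hv⟩ := hVne
        obtain ⟨p₀, hp₀⟩ := hP
        refine ⟨v, hv, p₀, hp₀, p₀, hp₀, ?_⟩
        simp [← h0]
      · have hdpq : 0 < dist p q := lt_of_lt_of_le hpos hdiam_le
        have hpq_ne : p - q ≠ 0 := sub_ne_zero_of_ne (dist_pos.1 hdpq)
        have hnorm : ‖p - q‖ = dist p q := (dist_eq_norm p q).symm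
        set u := ‖p - q‖⁻¹ • (p - q) with hu
        have hu1 : ‖u‖ = 1 := norm_smul_inv_norm hpq_ne
        obtain ⟨v, hv, huv⟩ := hVnet u hu1
        have hvv : ‖v‖ = 1 := hVunit v hv
        have hinner : 1 - ε ≤ ⟪u, v⟫ := by
          have h2 : ‖u - v‖^2 = ‖u‖^2 - 2*⟪u,v⟫ + ‖v‖^2 := norm_sub_sq_real u v
          rw [hu1, hvv] at h2
          have h3 : ‖u - v‖ ≤ δ := by rwa [← dist_eq_norm]
          have h4 : ‖u - v‖^2 ≤ δ^2 := by nlinarith [norm_nonneg (u - v)]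
          rw [hδsq] at h4
          nlinarith
        refine ⟨v, hv, p, hp, q, hq, ?_⟩
        have hnz : ‖p - q‖ ≠ 0 := by rw [hnorm]; exact hdpq.ne'
        have hsm : p - q = ‖p - q‖ • u := by rw [hu, smul_inv_smul₀ hnz]
        have hcalc : ⟪p - q, v⟫ = ‖p - q‖ * ⟪u, v⟫ := by
          calc ⟪p - q, v⟫ = ⟪‖p - q‖ • u, v⟫ := by rw [← hsm]
            _ = ‖p - q‖ * ⟪u, v⟫ := real_inner_smul_left _ _ _
        rw [hdiam, ← hnorm, hcalc]
        have := mul_le_mul_of_nonneg_left hinner (norm_nonneg (p - q))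
        nlinarith [norm_nonneg (p - q)]
end

section
/- For every dimension d ≥ 1 there is a constant C = C(d) > 0 with the following property. Let ℓ₀ > 0, let k ≥ 1 be an integer, and partition the cube [0, ℓ₀]^d into the k^d closed grid cells ∏_{i=1}^d [a_i·ℓ₀/k, (a_i+1)·ℓ₀/k] for a ∈ {0,…,k−1}^d. Let D ⊆ ℝ^d be a convex set and let L ≥ 0. Then the number of grid cells that contain a point at distance at most L from the topological boundary of D is at most C·k^{d−1}·(1 + (kL/ℓ₀)^d). -/
/-!
At a frontier point `y` of a convex set there is a supporting normal `ν`; let `i` be a coordinate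
where `|ν i|` is largest. The support inequality then controls the `i`-th coordinate of any other
frontier point by the remaining ones. So if two cells near the frontier have the same `i`, the same
sign of `ν i`, and agree off coordinate `i`, their `i`-th indices differ by `O(d (1 + kL/ℓ₀))`.
The map `a ↦ (i, sign (ν i), a without its i-th entry)` takes at most `3 d k^(d-1)` values, so
there are `O(d² k^(d-1) (1 + kL/ℓ₀))` such cells.
-/

open Finset

theorem Convex.exists_forall_le_of_mem_frontier {E : Type*} [NormedAddCommGroup E]
    [NormedSpace ℝ E] [FiniteDimensional ℝ E] {s : Set E} (hs : Convex ℝ s) {x : E}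
    (hx : x ∈ frontier s) : ∃ f : StrongDual ℝ E, f ≠ 0 ∧ ∀ z ∈ closure s, f z ≤ f x := by
  suffices ∃ f : StrongDual ℝ E, f ≠ 0 ∧ ∀ z ∈ s, f z ≤ f x by
    obtain ⟨f, hf0, hf⟩ := this
    exact ⟨f, hf0, fun z hz => closure_minimal hf (isClosed_le f.continuous continuous_const) hz⟩
  rcases (interior s).eq_empty_or_nonempty with hint | hint
  · have hx_span : x ∈ affineSpan ℝ s :=
      closure_minimal (subset_affineSpan ℝ s) (affineSpan ℝ s).closed_of_finiteDimensional
        (frontier_subset_closure hx)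
    have hdir : (affineSpan ℝ s).direction < ⊤ := by
      rw [lt_top_iff_ne_top, Ne, AffineSubspace.direction_eq_top_iff_of_nonempty ⟨x, hx_span⟩,
        ← hs.interior_nonempty_iff_affineSpan_eq_top, hint]
      exact Set.not_nonempty_empty
    obtain ⟨f, hf0, hf⟩ := Submodule.exists_dual_map_eq_bot_of_lt_top hdir inferInstance
    refine ⟨LinearMap.toContinuousLinearMap f, by simpa using hf0, fun z hz => le_of_eq ?_⟩
    have hzx : f (z -ᵥ x) = 0 := (Submodule.mem_bot ℝ).1 <| hf ▸ Submodule.mem_map_of_mem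
      (AffineSubspace.vsub_mem_direction (subset_affineSpan ℝ s hz) hx_span)
    simpa [sub_eq_zero] using hzx
  · exact geometric_hahn_banach_of_nonempty_interior_point hs hx.2 hint

theorem Convex.exists_inner_sub_nonpos_of_mem_frontier {E : Type*} [NormedAddCommGroup E]
    [InnerProductSpace ℝ E] [FiniteDimensional ℝ E] {s : Set E} (hs : Convex ℝ s) {x : E}
    (hx : x ∈ frontier s) : ∃ ν : E, ν ≠ 0 ∧ ∀ z ∈ closure s, inner ℝ ν (z - x) ≤ 0 := by
  obtain ⟨f, hf0, hf⟩ := hs.exists_forall_le_of_mem_frontier hx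
  refine ⟨(InnerProductSpace.toDual ℝ E).symm f, by simpa using hf0, fun z hz => ?_⟩
  rw [InnerProductSpace.toDual_symm_apply, map_sub]
  exact sub_nonpos.2 (hf z hz)

theorem Finset.card_le_mul_card_image_of_abs_sub_le {α β : Type*} [DecidableEq β] {s : Finset α}
    (f : α → β) (g : α → ℤ) {R : ℝ} (hR : 0 ≤ R) (hinj : Set.InjOn (fun a => (f a, g a)) s)
    (hclose : ∀ a ∈ s, ∀ b ∈ s, f a = f b → |(g a - g b : ℝ)| ≤ R) :
    (#s : ℝ) ≤ (2 * R + 1) * #(s.image f) := by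
  set r := ⌊R⌋₊
  have hfiber : ∀ p ∈ s.image f, #{a ∈ s | f a = p} ≤ 2 * r + 1 := fun p hp => by
    obtain ⟨a₀, ha₀, rfl⟩ := mem_image.1 hp
    calc #{a ∈ s | f a = f a₀} ≤ #(Icc (g a₀ - r) (g a₀ + r)) := by
          refine card_le_card_of_injOn g (fun a ha => ?_) fun a ha b hb hab => ?_
          · rw [mem_coe, mem_filter] at ha
            have hclose_r : |g a - g a₀| ≤ r := by
              rw [Int.natCast_floor_eq_floor hR, Int.le_floor]
              exact_mod_cast hclose a ha.1 a₀ ha₀ ha.2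
            rw [mem_coe, mem_Icc]
            constructor <;> linarith [abs_le.1 hclose_r]
          · rw [mem_coe, mem_filter] at ha hb
            exact hinj ha.1 hb.1 (Prod.ext (ha.2.trans hb.2.symm) hab)
      _ = 2 * r + 1 := by rw [Int.card_Icc]; omega
  calc (#s : ℝ) ≤ (2 * r + 1) * #(s.image f) := by
        exact_mod_cast card_le_mul_card_image s _ hfiber
    _ ≤ (2 * R + 1) * #(s.image f) := by
        gcongr
        exact Nat.floor_le hR

theorem Fin.apply_eq_of_removeNth_eq {α : Type*} {n : ℕ} {p : Fin (n + 1)}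
    {f g : Fin (n + 1) → α} (h : Fin.removeNth p f = Fin.removeNth p g) {j : Fin (n + 1)}
    (hj : j ≠ p) : f j = g j := by
  obtain ⟨l, rfl⟩ := Fin.exists_succAbove_eq hj
  exact congrFun h l

theorem one_add_le_two_mul_one_add_pow {t : ℝ} (ht : 0 ≤ t) {m : ℕ} (hm : m ≠ 0) :
    1 + t ≤ 2 * (1 + t ^ m) := by
  rcases le_total t 1 with h | h
  · nlinarith [pow_nonneg ht m]
  · linarith [le_self_pow₀ h hm]

theorem abs_sub_le_of_mem_cell {a h x y : ℝ} (hx : a * h ≤ x ∧ x ≤ (a + 1) * h)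
    (hy : a * h ≤ y ∧ y ≤ (a + 1) * h) : |x - y| ≤ h :=
  abs_le.2 ⟨by linarith, by linarith⟩

theorem abs_sub_mul_le_of_mem_cell {a b h x y : ℝ} (hx : a * h ≤ x ∧ x ≤ (a + 1) * h)
    (hy : b * h ≤ y ∧ y ≤ (b + 1) * h) : |a - b| * h ≤ |x - y| + h := by
  have hh : 0 ≤ h := by linarith
  rw [← abs_of_nonneg hh, ← abs_mul, abs_of_nonneg hh, sub_mul]
  exact abs_le.2 ⟨by linarith [neg_abs_le (x - y)], by linarith [le_abs_self (x - y)]⟩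

namespace EuclideanSpace

variable {ι : Type*} [Fintype ι]

theorem abs_apply_sub_le_dist (x y : EuclideanSpace ℝ ι) (i : ι) : |x i - y i| ≤ dist x y :=
  Real.dist_eq (x i) (y i) ▸ PiLp.dist_apply_le x y i

theorem sign_mul_apply_le_of_inner_nonpos {ν w : EuclideanSpace ℝ ι} {i : ι} {δ : ℝ}
    (hδ : 0 ≤ δ) (hνi : ν i ≠ 0) (hν : ∀ j, |ν j| ≤ |ν i|) (hw : ∀ j ≠ i, |w j| ≤ δ)
    (hνw : inner ℝ ν w ≤ 0) : SignType.sign (ν i) * w i ≤ Fintype.card ι * δ := by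
  classical
  have hsplit : inner ℝ ν w = ν i * w i + ∑ j ∈ univ.erase i, ν j * w j := by
    rw [add_sum_erase _ (fun j => ν j * w j) (mem_univ i)]
    simp [PiLp.inner_apply, mul_comm]
  have hrest : -(Fintype.card ι * (|ν i| * δ)) ≤ ∑ j ∈ univ.erase i, ν j * w j := by
    have hterm : ∀ j ∈ univ.erase i, -(|ν i| * δ) ≤ ν j * w j := fun j hj =>
      neg_le_of_abs_le <| abs_mul (ν j) (w j) ▸
        mul_le_mul (hν j) (hw j (ne_of_mem_erase hj)) (abs_nonneg _) (abs_nonneg _)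
    have hcard : (#(univ.erase i) : ℝ) ≤ Fintype.card ι := by
      exact_mod_cast card_le_univ _
    have := card_nsmul_le_sum _ _ _ hterm
    rw [nsmul_eq_mul] at this
    nlinarith [mul_le_mul_of_nonneg_right hcard (mul_nonneg (abs_nonneg (ν i)) hδ)]
  have hmain : |ν i| * (SignType.sign (ν i) * w i) ≤ |ν i| * (Fintype.card ι * δ) := by
    rw [← mul_assoc, abs_mul_sign]
    linarith
  exact le_of_mul_le_mul_left hmain (abs_pos.2 hνi)

theorem abs_apply_sub_le_of_inner_nonpos {ν ν' y y' : EuclideanSpace ℝ ι} {i : ι} {δ : ℝ}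
    (hδ : 0 ≤ δ) (hνi : ν i ≠ 0) (hν : ∀ j, |ν j| ≤ |ν i|) (hν' : ∀ j, |ν' j| ≤ |ν' i|)
    (hsign : SignType.sign (ν i) = SignType.sign (ν' i)) (hy : ∀ j ≠ i, |y j - y' j| ≤ δ)
    (hsupp : inner ℝ ν (y' - y) ≤ 0) (hsupp' : inner ℝ ν' (y - y') ≤ 0) :
    |y i - y' i| ≤ Fintype.card ι * δ := by
  have hν'i : ν' i ≠ 0 := sign_ne_zero.1 (hsign ▸ sign_ne_zero.2 hνi)
  have h := sign_mul_apply_le_of_inner_nonpos hδ hνi hν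
    (fun j hj => by simpa [abs_sub_comm] using hy j hj) hsupp
  have h' := sign_mul_apply_le_of_inner_nonpos hδ hν'i hν' (fun j hj => by simpa using hy j hj)
    hsupp'
  rw [← hsign] at h'
  simp only [PiLp.sub_apply] at h h'
  rcases hνi.lt_or_gt with hneg | hpos
  · simp only [sign_neg hneg, SignType.coe_neg_one] at h h'
    exact abs_le.2 ⟨by linarith, by linarith⟩
  · simp only [sign_pos hpos, SignType.coe_one] at h h'
    exact abs_le.2 ⟨by linarith, by linarith⟩

theorem abs_sub_mul_le_of_support_of_mem_cells {a b : ι → ℝ} {h L : ℝ}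
    {x x' y y' ν ν' : EuclideanSpace ℝ ι} {i : ι}
    (hx : ∀ j, a j * h ≤ x j ∧ x j ≤ (a j + 1) * h)
    (hx' : ∀ j, b j * h ≤ x' j ∧ x' j ≤ (b j + 1) * h)
    (hxy : dist x y ≤ L) (hxy' : dist x' y' ≤ L)
    (hνi : ν i ≠ 0) (hν : ∀ j, |ν j| ≤ |ν i|) (hν' : ∀ j, |ν' j| ≤ |ν' i|)
    (hsign : SignType.sign (ν i) = SignType.sign (ν' i)) (hab : ∀ j ≠ i, a j = b j)
    (hsupp : inner ℝ ν (y' - y) ≤ 0) (hsupp' : inner ℝ ν' (y - y') ≤ 0) :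
    |a i - b i| * h ≤ (Fintype.card ι + 1) * (h + 2 * L) := by
  have hh : 0 ≤ h := by linarith [hx i]
  have hL : 0 ≤ L := dist_nonneg.trans hxy
  have hxy_i : ∀ j, |x j - y j| ≤ L := fun j => (abs_apply_sub_le_dist x y j).trans hxy
  have hxy_i' : ∀ j, |x' j - y' j| ≤ L := fun j => (abs_apply_sub_le_dist x' y' j).trans hxy'
  have hdetour : ∀ p q q' p' : ℝ, |p - p'| ≤ |p - q| + |q - q'| + |q' - p'| := fun p q q' p' =>
    calc |p - p'| = |(p - q) + (q - q') + (q' - p')| := by ring_nf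
      _ ≤ _ := abs_add_three _ _ _
  have hyy' : ∀ j ≠ i, |y j - y' j| ≤ h + 2 * L := fun j hj => by
    have hxx' := abs_sub_le_of_mem_cell (hx j) (hab j hj ▸ hx' j)
    linarith [hdetour (y j) (x j) (x' j) (y' j), abs_sub_comm (y j) (x j), hxy_i j, hxy_i' j]
  have hyi := abs_apply_sub_le_of_inner_nonpos (by positivity) hνi hν hν' hsign hyy' hsupp hsupp'
  calc |a i - b i| * h ≤ |x i - x' i| + h := abs_sub_mul_le_of_mem_cell (hx i) (hx' i)
    _ ≤ (Fintype.card ι + 1) * (h + 2 * L) := by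
      linarith [hdetour (x i) (y i) (y' i) (x' i), abs_sub_comm (y' i) (x' i), hxy_i i, hxy_i' i]

end EuclideanSpace

theorem ncard_cells_near_frontier_le {n k : ℕ} {h L : ℝ} (hh : 0 < h) (hL : 0 ≤ L)
    {D : Set (EuclideanSpace ℝ (Fin (n + 1)))} (hD : Convex ℝ D) :
    ({a : Fin (n + 1) → Fin k | ∃ x : EuclideanSpace ℝ (Fin (n + 1)),
        (∀ i, (a i : ℝ) * h ≤ x i ∧ x i ≤ ((a i : ℝ) + 1) * h) ∧
        ∃ y ∈ frontier D, dist x y ≤ L}.ncard : ℝ)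
      ≤ 6 * (n + 1) * (2 * n + 5) * k ^ n * (1 + L / h) := by
  classical
  set S : Set (Fin (n + 1) → Fin k) := {a | ∃ x : EuclideanSpace ℝ (Fin (n + 1)),
        (∀ i, (a i : ℝ) * h ≤ x i ∧ x i ≤ ((a i : ℝ) + 1) * h) ∧
        ∃ y ∈ frontier D, dist x y ≤ L}
  choose! x hx y hyD hxy using fun a (ha : a ∈ S) => ha
  choose! ν hν0 hν using fun a (ha : a ∈ S) =>
    hD.exists_inner_sub_nonpos_of_mem_frontier (hyD a ha)
  choose i hi using fun a => Finite.exists_max fun j => |ν a j|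
  have hνi : ∀ a ∈ S, ν a (i a) ≠ 0 := fun a ha h0 => hν0 a ha <| by
    ext j
    simpa [h0] using hi a j
  set key := fun a => (i a, SignType.sign (ν a (i a)), Fin.removeNth (i a) a)
  set R : ℝ := (n + 2) * (1 + 2 * (L / h))
  have hcount := S.toFinset.card_le_mul_card_image_of_abs_sub_le key (fun a => (a (i a) : ℤ))
    (by positivity : 0 ≤ R) ?inj ?close
  case inj =>
    rintro a - b - hab
    simp only [key, Prod.mk.injEq] at hab
    obtain ⟨⟨hia, -, hrem⟩, hval⟩ := hab
    rw [← hia] at hrem hval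
    exact (Fin.insertNthEquiv (fun _ => Fin k) (i a)).symm.injective
      (Prod.ext (Fin.ext (by exact_mod_cast hval)) hrem)
  case close =>
    intro a ha b hb hab
    simp only [key, Prod.mk.injEq] at hab
    obtain ⟨hia, hsign, hrem⟩ := hab
    rw [Set.mem_toFinset] at ha hb
    rw [← hia] at hsign hrem ⊢
    have hcell := EuclideanSpace.abs_sub_mul_le_of_support_of_mem_cells (hx a ha) (hx b hb)
      (hxy a ha) (hxy b hb) (hνi a ha) (hi a) (hia ▸ hi b) hsign
      (fun j hj => congrArg (fun c : Fin k => ((c : ℕ) : ℝ)) (Fin.apply_eq_of_removeNth_eq hrem hj))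
      (hν a ha _ (frontier_subset_closure (hyD b hb)))
      (hν b hb _ (frontier_subset_closure (hyD a ha)))
    rw [Fintype.card_fin] at hcell
    push_cast
    refine le_of_mul_le_mul_right (hcell.trans_eq ?_) hh
    simp only [R]
    field_simp
    push_cast
    ring
  have himage : #(S.toFinset.image key) ≤ (n + 1) * 3 * k ^ n :=
    (card_le_univ _).trans (by simp [show Fintype.card SignType = 3 from rfl, mul_assoc])
  rw [Set.ncard_eq_toFinset_card']
  calc (#S.toFinset : ℝ) ≤ (2 * R + 1) * ((n + 1) * 3 * k ^ n) := by
        refine hcount.trans (mul_le_mul_of_nonneg_left ?_ (by positivity))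
        exact_mod_cast himage
    _ ≤ 6 * (n + 1) * (2 * n + 5) * k ^ n * (1 + L / h) := by
        have : 0 ≤ (n + 1 : ℝ) * k ^ n * (2 * n + 5 + 2 * (L / h)) := by positivity
        linarith

theorem grid_cells_near_convex_boundary :
    ∀ d : ℕ, 1 ≤ d → ∃ C : ℝ, 0 < C ∧
      ∀ (ℓ₀ : ℝ), 0 < ℓ₀ → ∀ (k : ℕ), 1 ≤ k →
        ∀ (D : Set (EuclideanSpace ℝ (Fin d))), Convex ℝ D →
          ∀ (L : ℝ), 0 ≤ L →
            (({a : Fin d → Fin k |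
                ∃ x : EuclideanSpace ℝ (Fin d),
                  (∀ i : Fin d,
                    (a i : ℝ) * ℓ₀ / k ≤ x i ∧ x i ≤ ((a i : ℝ) + 1) * ℓ₀ / k) ∧
                  ∃ y ∈ frontier D, dist x y ≤ L}).ncard : ℝ)
              ≤ C * (k : ℝ) ^ (d - 1) * (1 + ((k : ℝ) * L / ℓ₀) ^ d) := by
  intro d hd
  obtain ⟨n, rfl⟩ : ∃ n, d = n + 1 := ⟨d - 1, by omega⟩
  refine ⟨12 * (n + 1) * (2 * n + 5), by positivity, fun ℓ₀ hℓ₀ k hk D hD L hL => ?_⟩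
  have hh : 0 < ℓ₀ / k := div_pos hℓ₀ (by exact_mod_cast hk)
  have hbound := ncard_cells_near_frontier_le (k := k) hh hL hD
  have ht : L / (ℓ₀ / k) = k * L / ℓ₀ := by field_simp
  simp only [mul_div_assoc, ht] at hbound ⊢
  rw [Nat.add_sub_cancel]
  calc _ ≤ _ := hbound
    _ ≤ 6 * (n + 1) * (2 * n + 5) * k ^ n * (2 * (1 + (k * (L / ℓ₀)) ^ (n + 1))) := by
      gcongr
      exact one_add_le_two_mul_one_add_pow (by positivity) n.add_one_ne_zero
    _ = _ := by ring
end

section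
/- Let P be a bounded subset of the Euclidean space ℝ^d, let x be a point of the convex hull of P, and let y ∈ ℝ^d and s ≥ 0 be such that x ≠ y and the closed ball of radius s centered at y is contained in the convex hull of P. Then diam(P) ≥ dist(x, y) + s. -/
theorem diameter_ge_dist_plus_inscribed_radius
    (d : ℕ) (P : Set (EuclideanSpace ℝ (Fin d)))
    (hbd : Bornology.IsBounded P)
    (x : EuclideanSpace ℝ (Fin d)) (hx : x ∈ convexHull ℝ P)
    (y : EuclideanSpace ℝ (Fin d)) (s : ℝ) (hs : 0 ≤ s) (hxy : x ≠ y)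
    (hball : Metric.closedBall y s ⊆ convexHull ℝ P) :
    dist x y + s ≤ Metric.diam P := by
  have hnorm : ‖y - x‖ ≠ 0 := by
    simpa [sub_eq_zero] using (Ne.symm hxy)
  set z : EuclideanSpace ℝ (Fin d) := y + (s / ‖y - x‖) • (y - x) with hz
  have hzball : z ∈ Metric.closedBall y s := by
    simp only [Metric.mem_closedBall, dist_eq_norm, hz]
    rw [show y + (s / ‖y - x‖) • (y - x) - y = (s / ‖y - x‖) • (y - x) by abel]
    rw [norm_smul, Real.norm_eq_abs, abs_of_nonneg (div_nonneg hs (norm_nonneg _)),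
      div_mul_cancel₀ _ hnorm]
  have hdist : dist x z = dist x y + s := by
    rw [dist_eq_norm, dist_eq_norm, hz]
    have : x - (y + (s / ‖y - x‖) • (y - x)) = -((1 + s / ‖y - x‖) • (y - x)) := by
      rw [add_smul, one_smul]; abel
    rw [this, norm_neg, norm_smul, Real.norm_eq_abs,
      abs_of_nonneg (by positivity : (0:ℝ) ≤ 1 + s / ‖y - x‖), add_mul, one_mul,
      div_mul_cancel₀ _ hnorm, ← norm_neg, neg_sub]
  rw [← convexHull_diam, ← hdist]
  exact Metric.dist_le_diam_of_mem (isBounded_convexHull.mpr hbd) hx (hball hzball)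
end

section
/- There is an absolute constant C > 0 with the following property: for every dimension d ≥ 2 and every ε ∈ (0,1], there exists a finite set N of unit vectors in the Euclidean space ℝ^d with |N| ≤ C/√ε, such that for every unit vector w ∈ ℝ^d there is some n ∈ N with |⟨w, n⟩| ≤ sin(√ε); that is, every direction makes an angle of at most √ε with one of the |N| hyperplanes through the origin with normals in N. -/
open RealInnerProductSpace

/-!
All normals lie on the great circle `c θ = cos θ • e₀ + sin θ • e₁`, at the points `c (k π / m)`,
`0 ≤ k ≤ m`. For a unit vector `w`, the function `θ ↦ ⟪w, c θ⟫` changes sign on `[0, π]` because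
`c π = -c 0`, so it vanishes at some `θ`; as `c` is `1`-Lipschitz, the grid point just below `θ`
gives `|⟪w, n⟫| ≤ π / m`. Taking `m = ⌈π / sin √ε⌉`, Jordan's inequality `sin t ≥ 2t / π` gives
`m + 1 = O(1 / √ε)`.
-/

open Real Set

lemma exists_le_abs_sub_nat_mul_le {δ θ : ℝ} (hδ : 0 < δ) {m : ℕ} (hθ : θ ∈ Icc 0 (m * δ)) :
    ∃ k ≤ m, |θ - k * δ| ≤ δ := by
  obtain ⟨hθ0, hθm⟩ := hθ
  have hq : 0 ≤ θ / δ := div_nonneg hθ0 hδ.le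
  refine ⟨⌊θ / δ⌋₊, Nat.floor_le_of_le ((div_le_iff₀ hδ).mpr hθm), abs_le.mpr ⟨?_, ?_⟩⟩
  · have := (le_div_iff₀ hδ).mp (Nat.floor_le hq)
    linarith
  · have := (div_lt_iff₀ hδ).mp (Nat.lt_floor_add_one (θ / δ))
    linarith

section GreatCircle

variable {E : Type*} [NormedAddCommGroup E] [InnerProductSpace ℝ E]

noncomputable def greatCircle (u v : E) (θ : ℝ) : E := cos θ • u + sin θ • v

@[fun_prop]
lemma continuous_greatCircle (u v : E) : Continuous (greatCircle u v) := by
  unfold greatCircle; fun_prop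

lemma greatCircle_pi (u v : E) : greatCircle u v π = -greatCircle u v 0 := by
  simp [greatCircle]

lemma inner_greatCircle {u v : E} (hu : ‖u‖ = 1) (hv : ‖v‖ = 1) (huv : ⟪u, v⟫ = 0) (x y : ℝ) :
    ⟪greatCircle u v x, greatCircle u v y⟫ = cos (x - y) := by
  have hvu : ⟪v, u⟫ = 0 := by rw [real_inner_comm, huv]
  simp only [greatCircle, inner_add_left, inner_add_right, real_inner_smul_left,
    real_inner_smul_right, real_inner_self_eq_norm_sq, hu, hv, huv, hvu, cos_sub]
  ring

lemma norm_greatCircle {u v : E} (hu : ‖u‖ = 1) (hv : ‖v‖ = 1) (huv : ⟪u, v⟫ = 0) (θ : ℝ) :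
    ‖greatCircle u v θ‖ = 1 := by
  have h := inner_greatCircle hu hv huv θ θ
  rw [sub_self, cos_zero, real_inner_self_eq_norm_sq] at h
  exact (pow_eq_one_iff_of_nonneg (norm_nonneg _) two_ne_zero).mp h

lemma norm_greatCircle_sub_le {u v : E} (hu : ‖u‖ = 1) (hv : ‖v‖ = 1) (huv : ⟪u, v⟫ = 0)
    (x y : ℝ) : ‖greatCircle u v x - greatCircle u v y‖ ≤ |x - y| := by
  refine (sq_le_sq₀ (norm_nonneg _) (abs_nonneg _)).mp ?_
  rw [norm_sub_sq_real, inner_greatCircle hu hv huv, norm_greatCircle hu hv huv,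
    norm_greatCircle hu hv huv, sq_abs]
  linarith [one_sub_sq_div_two_le_cos (x := x - y)]

lemma exists_inner_greatCircle_eq_zero (u v w : E) :
    ∃ θ ∈ Icc 0 π, ⟪w, greatCircle u v θ⟫ = 0 := by
  have hcont : ContinuousOn (fun θ ↦ ⟪w, greatCircle u v θ⟫) (uIcc 0 π) := by fun_prop
  have hsign : (0 : ℝ) ∈ uIcc ⟪w, greatCircle u v 0⟫ ⟪w, greatCircle u v π⟫ := by
    rw [greatCircle_pi, inner_neg_right, mem_uIcc]
    rcases le_total 0 ⟪w, greatCircle u v 0⟫ with h | h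
    · exact Or.inr ⟨by linarith, h⟩
    · exact Or.inl ⟨h, by linarith⟩
  obtain ⟨θ, hθ, hzero⟩ := intermediate_value_uIcc hcont hsign
  exact ⟨θ, uIcc_of_le pi_pos.le ▸ hθ, hzero⟩

lemma exists_abs_inner_greatCircle_le {u v : E} (hu : ‖u‖ = 1) (hv : ‖v‖ = 1)
    (huv : ⟪u, v⟫ = 0) (w : E) {m : ℕ} (hm : 0 < m) :
    ∃ k ≤ m, |⟪w, greatCircle u v (k * (π / m))⟫| ≤ ‖w‖ * (π / m) := by
  have hδ : 0 < π / m := by positivity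
  obtain ⟨θ, hθ, hzero⟩ := exists_inner_greatCircle_eq_zero u v w
  have hθ' : θ ∈ Icc 0 (m * (π / m)) := by rwa [mul_div_cancel₀ _ (by positivity)]
  obtain ⟨k, hkm, hk⟩ := exists_le_abs_sub_nat_mul_le hδ hθ'
  refine ⟨k, hkm, ?_⟩
  calc |⟪w, greatCircle u v (k * (π / m))⟫|
      = |⟪w, greatCircle u v (k * (π / m)) - greatCircle u v θ⟫| := by
        rw [inner_sub_right, hzero, sub_zero]
    _ ≤ ‖w‖ * ‖greatCircle u v (k * (π / m)) - greatCircle u v θ‖ :=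
        abs_real_inner_le_norm _ _
    _ ≤ ‖w‖ * (π / m) := by
        gcongr
        rw [← abs_sub_comm] at hk
        exact (norm_greatCircle_sub_le hu hv huv _ _).trans hk

end GreatCircle

lemma natCeil_pi_div_sin_add_one_le {t : ℝ} (ht0 : 0 < t) (ht1 : t ≤ 1) :
    (⌈π / sin t⌉₊ : ℝ) + 1 ≤ (π ^ 2 / 2 + 2) / t := by
  have hsin : 2 / π * t ≤ sin t := mul_le_sin ht0.le (by linarith [pi_gt_three])
  have hsin0 : 0 < sin t := lt_of_lt_of_le (by positivity) hsin
  have hceil : (⌈π / sin t⌉₊ : ℝ) < π / sin t + 1 := Nat.ceil_lt_add_one (by positivity)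
  have hpi : π / sin t ≤ π ^ 2 / 2 / t := by
    rw [div_le_div_iff₀ hsin0 ht0]
    calc π * t = π ^ 2 / 2 * (2 / π * t) := by field_simp
      _ ≤ π ^ 2 / 2 * sin t := by gcongr
  have htwo : (2 : ℝ) ≤ 2 / t := by rw [le_div_iff₀ ht0]; linarith
  calc (⌈π / sin t⌉₊ : ℝ) + 1 ≤ π ^ 2 / 2 / t + 2 / t := by linarith
    _ = (π ^ 2 / 2 + 2) / t := by ring

theorem hyperplane_family_covers_directions :
    ∃ C : ℝ, 0 < C ∧
      ∀ d : ℕ, 2 ≤ d → ∀ ε : ℝ, 0 < ε → ε ≤ 1 →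
        ∃ N : Finset (EuclideanSpace ℝ (Fin d)),
          (∀ n ∈ N, ‖n‖ = 1) ∧
          (N.card : ℝ) ≤ C / Real.sqrt ε ∧
          ∀ w : EuclideanSpace ℝ (Fin d), ‖w‖ = 1 →
            ∃ n ∈ N, |⟪w, n⟫| ≤ Real.sin (Real.sqrt ε) := by
  classical
  refine ⟨π ^ 2 / 2 + 2, by positivity, fun d hd ε hε hε1 ↦ ?_⟩
  have ht0 : 0 < √ε := sqrt_pos.mpr hε
  have ht1 : √ε ≤ 1 := sqrt_le_one.mpr hε1
  have hsin : 0 < sin √ε := sin_pos_of_pos_of_lt_pi ht0 (by linarith [pi_gt_three])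
  set m := ⌈π / sin √ε⌉₊
  have hm : 0 < m := Nat.ceil_pos.mpr (by positivity)
  have hstep : π / m ≤ sin √ε := by
    rw [div_le_iff₀ (by positivity), mul_comm]
    exact (div_le_iff₀ hsin).mp (Nat.le_ceil _)
  obtain ⟨hunit, horth⟩ := (EuclideanSpace.basisFun (Fin d) ℝ).orthonormal
  have h01 : (⟨0, by omega⟩ : Fin d) ≠ ⟨1, by omega⟩ := by simp
  set c := greatCircle (EuclideanSpace.basisFun (Fin d) ℝ ⟨0, by omega⟩)
    (EuclideanSpace.basisFun (Fin d) ℝ ⟨1, by omega⟩)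
  refine ⟨(Finset.range (m + 1)).image fun k : ℕ ↦ c (k * (π / m)), ?_, ?_, ?_⟩
  · simp only [Finset.mem_image]
    rintro _ ⟨k, -, rfl⟩
    exact norm_greatCircle (hunit _) (hunit _) (horth h01) _
  · calc ((Finset.range (m + 1)).image _).card ≤ (m : ℝ) + 1 := by
          exact_mod_cast Finset.card_image_le.trans (Finset.card_range _).le
      _ ≤ (π ^ 2 / 2 + 2) / √ε := natCeil_pi_div_sin_add_one_le ht0 ht1
  · intro w hw
    obtain ⟨k, hkm, hk⟩ := exists_abs_inner_greatCircle_le (hunit _) (hunit _) (horth h01) w hm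
    rw [hw, one_mul] at hk
    exact ⟨_, Finset.mem_image_of_mem _ (Finset.mem_range.mpr (by omega)), hk.trans hstep⟩
end

section
/- Let P be a finite nonempty subset of the Euclidean space ℝ^d, let p*, q* ∈ P be a diametrical pair of P (dist(p*, q*) = diam(P)), let W be a linear subspace of ℝ^d with orthogonal projection π_W, and let ε ≥ 0. Suppose there is a nonzero vector w ∈ W such that the angle between q* − p* and w is at most √(2ε). Then (1 − ε)·diam(P) ≤ diam(π_W(P)) ≤ diam(P). -/
open Metric InnerProductGeometry
open scoped RealInnerProductSpace

theorem Real.one_sub_le_cos_of_le_sqrt_two_mul {ε θ : ℝ} (hε : 0 ≤ ε) (hθ : 0 ≤ θ)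
    (hθε : θ ≤ √(2 * ε)) : 1 - ε ≤ Real.cos θ := by
  have hsq : θ ^ 2 ≤ 2 * ε := by
    simpa only [Real.sq_sqrt (by linarith : (0 : ℝ) ≤ 2 * ε)] using pow_le_pow_left₀ hθ hθε 2
  linarith [Real.one_sub_sq_div_two_le_cos (x := θ)]

theorem Metric.mul_diam_le_diam_image {α β : Type*} [PseudoMetricSpace α] [PseudoMetricSpace β]
    {f : α → β} {s : Set α} {x y : α} {c : ℝ} (hx : x ∈ s) (hy : y ∈ s)
    (hxy : dist x y = diam s) (hfs : Bornology.IsBounded (f '' s))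
    (hc : c * dist x y ≤ dist (f x) (f y)) : c * diam s ≤ diam (f '' s) :=
  hxy ▸ hc.trans (dist_le_diam_of_mem hfs (Set.mem_image_of_mem f hx) (Set.mem_image_of_mem f hy))

namespace Submodule

variable {E : Type*} [NormedAddCommGroup E] [InnerProductSpace ℝ E]
  (K : Submodule ℝ E) [K.HasOrthogonalProjection]

theorem inner_starProjection_of_mem_right (v : E) {w : E} (hw : w ∈ K) :
    ⟪K.starProjection v, w⟫ = ⟪v, w⟫ := by
  rw [K.inner_starProjection_left_eq_right, K.starProjection_eq_self_iff.mpr hw]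

theorem norm_mul_cos_angle_le_norm_starProjection (v : E) {w : E} (hw : w ∈ K) :
    ‖v‖ * Real.cos (angle v w) ≤ ‖K.starProjection v‖ := by
  rcases eq_or_ne w 0 with rfl | hw0
  · simp [angle_zero_right]
  refine le_of_mul_le_mul_right ?_ (norm_pos_iff.mpr hw0)
  calc ‖v‖ * Real.cos (angle v w) * ‖w‖ = ⟪K.starProjection v, w⟫ := by
        rw [K.inner_starProjection_of_mem_right v hw, ← cos_angle_mul_norm_mul_norm]; ring
    _ ≤ ‖K.starProjection v‖ * ‖w‖ := real_inner_le_norm _ _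

end Submodule

theorem projection_onto_subspace_approximates_diameter_general
    (d : ℕ) (P : Finset (EuclideanSpace ℝ (Fin d)))
    (pstar qstar : EuclideanSpace ℝ (Fin d)) (hp : pstar ∈ P) (hq : qstar ∈ P)
    (hdiam : dist pstar qstar = Metric.diam (↑P : Set (EuclideanSpace ℝ (Fin d))))
    (W : Submodule ℝ (EuclideanSpace ℝ (Fin d)))
    (ε : ℝ) (hε : 0 ≤ ε)
    (w : EuclideanSpace ℝ (Fin d)) (hwW : w ∈ W)
    (hangle : InnerProductGeometry.angle (qstar - pstar) w ≤ Real.sqrt (2 * ε)) :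
    (1 - ε) * Metric.diam (↑P : Set (EuclideanSpace ℝ (Fin d))) ≤
        Metric.diam
          ((fun p => ((Submodule.orthogonalProjectionOnto W p : W) : EuclideanSpace ℝ (Fin d))) ''
            (↑P : Set (EuclideanSpace ℝ (Fin d)))) ∧
      Metric.diam
          ((fun p => ((Submodule.orthogonalProjectionOnto W p : W) : EuclideanSpace ℝ (Fin d))) ''
            (↑P : Set (EuclideanSpace ℝ (Fin d)))) ≤
        Metric.diam (↑P : Set (EuclideanSpace ℝ (Fin d))) := by
  set S : Set (EuclideanSpace ℝ (Fin d)) := ↑P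
  change (1 - ε) * diam S ≤ diam (W.starProjection '' S) ∧ diam (W.starProjection '' S) ≤ diam S
  have hPb : Bornology.IsBounded S := P.finite_toSet.isBounded
  have hlip := W.lipschitzWith_starProjection
  refine ⟨mul_diam_le_diam_image hq hp (dist_comm pstar qstar ▸ hdiam)
    (hlip.isBounded_image hPb) ?_, by simpa using hlip.diam_image_le _ hPb⟩
  rw [dist_eq_norm, dist_eq_norm, ← map_sub]
  calc (1 - ε) * ‖qstar - pstar‖
      ≤ ‖qstar - pstar‖ * Real.cos (angle (qstar - pstar) w) := by
        rw [mul_comm]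
        gcongr
        exact Real.one_sub_le_cos_of_le_sqrt_two_mul hε (angle_nonneg _ _) hangle
    _ ≤ ‖W.starProjection (qstar - pstar)‖ := W.norm_mul_cos_angle_le_norm_starProjection _ hwW

theorem projection_onto_subspace_approximates_diameter
    (d : ℕ) (P : Finset (EuclideanSpace ℝ (Fin d))) (hP : P.Nonempty)
    (pstar qstar : EuclideanSpace ℝ (Fin d)) (hp : pstar ∈ P) (hq : qstar ∈ P)
    (hdiam : dist pstar qstar = Metric.diam (↑P : Set (EuclideanSpace ℝ (Fin d))))
    (W : Submodule ℝ (EuclideanSpace ℝ (Fin d)))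
    (ε : ℝ) (hε : 0 ≤ ε)
    (w : EuclideanSpace ℝ (Fin d)) (hwW : w ∈ W) (hw0 : w ≠ 0)
    (hangle : InnerProductGeometry.angle (qstar - pstar) w ≤ Real.sqrt (2 * ε)) :
    (1 - ε) * Metric.diam (↑P : Set (EuclideanSpace ℝ (Fin d))) ≤
        Metric.diam
          ((fun p => ((Submodule.orthogonalProjectionOnto W p : W) : EuclideanSpace ℝ (Fin d))) ''
            (↑P : Set (EuclideanSpace ℝ (Fin d)))) ∧
      Metric.diam
          ((fun p => ((Submodule.orthogonalProjectionOnto W p : W) : EuclideanSpace ℝ (Fin d))) ''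
            (↑P : Set (EuclideanSpace ℝ (Fin d)))) ≤
        Metric.diam (↑P : Set (EuclideanSpace ℝ (Fin d))) :=
  projection_onto_subspace_approximates_diameter_general d P pstar qstar hp hq hdiam W ε hε w hwW
    hangle
end
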